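/- arXiv:2109.00470 — 4 statements merged into one kernel-verified Lean document; each statement's English description precedes it below -/
import Mathlib

section
/- Let $I \subseteq \mathbb{Z}/f\mathbb{Z}$ and let $x \in [0,1]^{\mathbb{Z}/f\mathbb{Z}}$ satisfy $\sum_{\tau \in I} (Tx)_\tau \le \sum_{\tau \in I} \tilde{x}_{I,\tau}$ and $(Tx)_\tau \ge \tilde{x}_{I,\tau}$ for all $\tau \notin I$. Then $x = x_I$. (This rigidity statement says that the region $S_{I,0}(\delta)$ of the paper degenerates to the single degree-vertex $x_I$ at $\delta = 0$.) -/
open Finset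

/-- The twisted directional degree map `T`: `(Tx)_τ = ∑_{j<f} p^{f-1-j} x_{τ+j}`,
where the Frobenius `σ` is the cyclic shift `τ ↦ τ + 1` on `ZMod f`. -/
noncomputable def Twist (p f : ℕ) (x : ZMod f → ℝ) : ZMod f → ℝ :=
  fun τ => ∑ j ∈ Finset.range f, (p : ℝ) ^ (f - 1 - j) * x (τ + (j : ZMod f))

/-- The vertex `x_I`: `x_{I,τ} = 0` if `τ ∈ I`, and `1` otherwise. -/
noncomputable def vert (f : ℕ) (I : Finset (ZMod f)) : ZMod f → ℝ :=
  fun τ => if τ ∈ I then 0 else 1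

/-- `N = ∑_{j=0}^{f-1} p^j`. -/
noncomputable def bigN (p f : ℕ) : ℝ := ∑ j ∈ Finset.range f, (p : ℝ) ^ j

/-- `M = ∑_{j=0}^{f-2} p^j` (zero when `f = 1`). -/
noncomputable def bigM (p f : ℕ) : ℝ := ∑ j ∈ Finset.range (f - 1), (p : ℝ) ^ j

lemma twist_rec (p g : ℕ) (x : ZMod (g+1) → ℝ) (τ : ZMod (g+1)) :
    (p:ℝ) * Twist p (g+1) x τ - Twist p (g+1) x (τ + 1) = ((p:ℝ)^(g+1) - 1) * x τ := by
  have hz : ((g+1 : ℕ) : ZMod (g+1)) = 0 := ZMod.natCast_self _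
  unfold Twist
  rw [Finset.mul_sum,
      Finset.sum_range_succ' (fun j => (p:ℝ) * ((p:ℝ)^(g+1-1-j) * x (τ + (j : ZMod (g+1))))),
      Finset.sum_range_succ]
  have key : ∀ j ∈ Finset.range g,
      (p:ℝ) * ((p:ℝ)^(g+1-1-(j+1)) * x (τ + ((j+1:ℕ) : ZMod (g+1))))
      = (p:ℝ)^(g+1-1-j) * x ((τ+1) + (j : ZMod (g+1))) := by
    intro j hj
    have hj' : j < g := Finset.mem_range.mp hj
    have h1 : (g+1-1-(j+1)) + 1 = g+1-1-j := by omega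
    have h2 : (τ + ((j+1 : ℕ) : ZMod (g+1))) = (τ+1) + (j : ZMod (g+1)) := by
      push_cast; ring
    rw [h2, ← h1, pow_succ]
    ring
  rw [Finset.sum_congr rfl key]
  have hlast : ((τ+1) + ((g:ℕ) : ZMod (g+1))) = τ := by
    have h : (1 : ZMod (g+1)) + ((g:ℕ) : ZMod (g+1)) = 0 := by
      have := hz; push_cast at this; simp [add_comm]
    rw [add_assoc, h, add_zero]
  rw [hlast]
  simp only [Nat.cast_zero, add_zero, Nat.sub_zero, Nat.add_sub_cancel, Nat.sub_self, pow_zero]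
  ring

theorem stmt_3 (p f : ℕ) (hp : 2 ≤ p) (hf : 1 ≤ f) [NeZero f]
    (I : Finset (ZMod f)) (x : ZMod f → ℝ) (hx : ∀ σ, x σ ∈ Set.Icc (0 : ℝ) 1)
    (h1 : ∑ τ ∈ I, Twist p f x τ ≤ ∑ τ ∈ I, Twist p f (vert f I) τ)
    (h2 : ∀ τ ∉ I, Twist p f (vert f I) τ ≤ Twist p f x τ) :
    x = vert f I := by
  obtain ⟨g, rfl⟩ : ∃ g, f = g + 1 := ⟨f - 1, by omega⟩
  have hp1 : (1:ℝ) < (p:ℝ) := by exact_mod_cast (by omega : 1 < p)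
  have hp0 : (0:ℝ) < (p:ℝ) := by linarith
  have hpf : (1:ℝ) < (p:ℝ)^(g+1) := one_lt_pow₀ hp1 (by omega)
  set u : ZMod (g+1) → ℝ := fun τ => Twist p (g+1) x τ - Twist p (g+1) (vert (g+1) I) τ with hu
  have hrec : ∀ τ, (p:ℝ) * u τ - u (τ+1)
      = ((p:ℝ)^(g+1) - 1) * (x τ - vert (g+1) I τ) := by
    intro τ
    have h1' := twist_rec p g x τ
    have h2' := twist_rec p g (vert (g+1) I) τ
    simp only [hu]; ring_nf; ring_nf at h1' h2'; linarith
  have hA : ∀ τ ∈ I, u (τ+1) ≤ (p:ℝ) * u τ := by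
    intro τ hτ
    have hv : vert (g+1) I τ = 0 := by simp [vert, hτ]
    have hx0 := (hx τ).1
    have := hrec τ
    rw [hv] at this
    nlinarith
  have hB : ∀ τ ∉ I, (p:ℝ) * u τ ≤ u (τ+1) := by
    intro τ hτ
    have hv : vert (g+1) I τ = 1 := by simp [vert, hτ]
    have hx1 := (hx τ).2
    have := hrec τ
    rw [hv] at this
    nlinarith
  have hu2 : ∀ τ ∉ I, 0 ≤ u τ := fun τ h => sub_nonneg.mpr (h2 τ h)
  -- Step 1: u ≥ 0 everywhere
  have hnn : ∀ τ, 0 ≤ u τ := by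
    intro τ
    by_contra hneg
    push_neg at hneg
    have claim : ∀ k : ℕ, u (τ + (k : ZMod (g+1))) ≤ (p:ℝ)^k * u τ := by
      intro k
      induction k with
      | zero => simp
      | succ k ih =>
        have hpk : (0:ℝ) < (p:ℝ)^k := pow_pos hp0 k
        have hlt : u (τ + (k : ZMod (g+1))) < 0 := lt_of_le_of_lt ih (by nlinarith)
        have hmem : (τ + (k : ZMod (g+1))) ∈ I := by
          by_contra h
          exact absurd (hu2 _ h) (not_le.mpr hlt)
        have hstep := hA _ hmem
        have hcast : (τ + ((k+1 : ℕ) : ZMod (g+1))) = (τ + (k : ZMod (g+1))) + 1 := by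
          push_cast; ring
        rw [hcast]
        calc u ((τ + (k : ZMod (g+1))) + 1) ≤ (p:ℝ) * u (τ + (k : ZMod (g+1))) := hstep
          _ ≤ (p:ℝ) * ((p:ℝ)^k * u τ) := by nlinarith
          _ = (p:ℝ)^(k+1) * u τ := by ring
    have hc := claim (g+1)
    rw [ZMod.natCast_self, add_zero] at hc
    nlinarith
  -- Step 2: u = 0 on I
  have hsum0 : ∑ τ ∈ I, u τ = 0 := by
    have hle : ∑ τ ∈ I, u τ ≤ 0 := by
      have : ∑ τ ∈ I, u τ = ∑ τ ∈ I, Twist p (g+1) x τ - ∑ τ ∈ I, Twist p (g+1) (vert (g+1) I) τ := by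
        rw [Finset.sum_sub_distrib]
      linarith [this ▸ sub_nonpos.mpr h1]
    exact le_antisymm hle (Finset.sum_nonneg fun τ _ => hnn τ)
  have huI : ∀ τ ∈ I, u τ = 0 :=
    (Finset.sum_eq_zero_iff_of_nonneg (fun τ _ => hnn τ)).mp hsum0
  -- Step 3: u = 0 everywhere
  have hall : ∀ τ, u τ = 0 := by
    intro τ
    by_contra h
    have hpos : 0 < u τ := lt_of_le_of_ne (hnn τ) (Ne.symm h)
    have claim : ∀ k : ℕ, (p:ℝ)^k * u τ ≤ u (τ + (k : ZMod (g+1))) := by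
      intro k
      induction k with
      | zero => simp
      | succ k ih =>
        have hpk : (0:ℝ) < (p:ℝ)^k := pow_pos hp0 k
        have hpos' : 0 < u (τ + (k : ZMod (g+1))) := lt_of_lt_of_le (by nlinarith) ih
        have hnotI : (τ + (k : ZMod (g+1))) ∉ I := by
          intro hm
          rw [huI _ hm] at hpos'
          exact lt_irrefl 0 hpos'
        have hstep := hB _ hnotI
        have hcast : (τ + ((k+1 : ℕ) : ZMod (g+1))) = (τ + (k : ZMod (g+1))) + 1 := by
          push_cast; ring
        rw [hcast]
        calc (p:ℝ)^(k+1) * u τ = (p:ℝ) * ((p:ℝ)^k * u τ) := by ring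
          _ ≤ (p:ℝ) * u (τ + (k : ZMod (g+1))) := by nlinarith
          _ ≤ u ((τ + (k : ZMod (g+1))) + 1) := hstep
    have hc := claim (g+1)
    rw [ZMod.natCast_self, add_zero] at hc
    nlinarith
  funext τ
  have := hrec τ
  rw [hall τ, hall (τ+1)] at this
  have hne : ((p:ℝ)^(g+1) - 1) ≠ 0 := by linarith
  have h0 : ((p:ℝ)^(g+1) - 1) * (x τ - vert (g+1) I τ) = 0 := by linarith
  rcases mul_eq_zero.mp h0 with h | h
  · exact absurd h hne
  · linarith
end

section
/- Let $I \subseteq \mathbb{Z}/f\mathbb{Z}$. For every $\epsilon > 0$ there exists $\delta > 0$ such that every $x \in [0,1]^{\mathbb{Z}/f\mathbb{Z}}$ satisfying $\sum_{\tau \in I} (Tx)_\tau \le \sum_{\tau \in I} \tilde{x}_{I,\tau} + \delta$ and $(Tx)_\tau \ge \tilde{x}_{I,\tau} - \delta$ for all $\tau \notin I$ also satisfies $|x_\tau - x_{I,\tau}| < \epsilon$ and $|(Tx)_\tau - \tilde{x}_{I,\tau}| < \epsilon$ for all $\tau$. (This justifies the paper's choice of $\delta$ so that $S_{I,0}(\delta)$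 is contained in the $\epsilon$-neighborhoods $\{|\tilde{\deg}_\tau y - \tilde{x}_{I,\tau}| < \epsilon\}$ and $\{|\deg_\tau y - x_{I,\tau}| < \epsilon\}$.) -/
open Finset

lemma geom_lt_pow (p n : ℕ) (hp : 2 ≤ p) : ∑ j ∈ Finset.range n, (p:ℝ)^j < (p:ℝ)^n := by
  induction n with
  | zero => simp
  | succ n ih =>
    rw [Finset.sum_range_succ, pow_succ]
    have hp2 : (2:ℝ) ≤ p := by exact_mod_cast hp
    nlinarith [pow_pos (show (0:ℝ) < p by linarith) n]

theorem stmt_4 (p f : ℕ) (hp : 2 ≤ p) (hf : 1 ≤ f) [NeZero f]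
    (I : Finset (ZMod f)) :
    ∀ ε : ℝ, 0 < ε → ∃ δ : ℝ, 0 < δ ∧
      ∀ x : ZMod f → ℝ, (∀ σ, x σ ∈ Set.Icc (0 : ℝ) 1) →
        (∑ τ ∈ I, Twist p f x τ ≤ ∑ τ ∈ I, Twist p f (vert f I) τ + δ) →
        (∀ τ ∉ I, Twist p f (vert f I) τ - δ ≤ Twist p f x τ) →
        ∀ τ, |x τ - vert f I τ| < ε ∧
          |Twist p f x τ - Twist p f (vert f I) τ| < ε := by
  intro ε hε
  set P : ℝ := (p:ℝ)^(f-1) with hPdef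
  have hppos : (0:ℝ) < p := by positivity
  have hp1 : (1:ℝ) ≤ p := by exact_mod_cast Nat.one_le_of_lt hp
  have hPpos : (0:ℝ) < P := pow_pos hppos _
  have hMnonneg : 0 ≤ bigM p f := Finset.sum_nonneg fun j _ => by positivity
  have hMP : bigM p f < P := geom_lt_pow p (f-1) hp
  have hNM : bigN p f = bigM p f + P := by
    rw [bigN, bigM, hPdef]
    rw [← Nat.sub_add_cancel hf, Finset.sum_range_succ]
    simp [Nat.sub_add_cancel hf]
  have hNnonneg : 0 ≤ bigN p f := by rw [hNM]; linarith
  have hf1 : (0:ℝ) < (f:ℝ) + 1 := by positivity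
  refine ⟨ε * (P - bigM p f) / ((f+1) * (bigN p f + 1)),
    div_pos (mul_pos hε (by linarith)) (by positivity), ?_⟩
  set δ : ℝ := ε * (P - bigM p f) / ((f+1) * (bigN p f + 1)) with hδdef
  intro x hx hsum hpt
  set d : ZMod f → ℝ := fun σ => x σ - vert f I σ with hd
  have hdI : ∀ σ ∈ I, 0 ≤ d σ := fun σ hσ => by
    simp only [hd, vert, if_pos hσ, sub_zero]; exact (hx σ).1
  have hdIc : ∀ σ ∉ I, d σ ≤ 0 := fun σ hσ => by
    simp only [hd, vert, if_neg hσ]; linarith [(hx σ).2]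
  set a : ℝ := ∑ σ ∈ I, d σ with ha
  set b : ℝ := ∑ σ ∈ Iᶜ, (-d σ) with hb
  have ha0 : 0 ≤ a := Finset.sum_nonneg hdI
  have hb0 : 0 ≤ b := Finset.sum_nonneg fun σ hσ => by
    simpa using hdIc σ (by simpa using hσ)
  -- sum of min parts over univ
  have hmin : ∀ c : ZMod f, ∑ σ : ZMod f, min (d (σ + c)) 0 = -b := by
    intro c
    have e2 : ∑ σ : ZMod f, min (d (σ + c)) 0 = ∑ σ : ZMod f, min (d σ) 0 :=
      Fintype.sum_equiv (Equiv.addRight c) _ _ (fun σ => rfl)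
    rw [e2, ← Finset.sum_add_sum_compl I]
    have e3 : ∑ σ ∈ I, min (d σ) 0 = 0 :=
      Finset.sum_eq_zero fun σ hσ => min_eq_right (hdI σ hσ)
    have e4 : ∑ σ ∈ Iᶜ, min (d σ) 0 = ∑ σ ∈ Iᶜ, d σ :=
      Finset.sum_congr rfl fun σ hσ => min_eq_left (hdIc σ (by simpa using hσ))
    rw [e3, e4, zero_add, hb]
    simp
  have hmax : ∀ c : ZMod f, ∑ σ : ZMod f, max (d (σ + c)) 0 = a := by
    intro c
    have e2 : ∑ σ : ZMod f, max (d (σ + c)) 0 = ∑ σ : ZMod f, max (d σ) 0 :=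
      Fintype.sum_equiv (Equiv.addRight c) _ _ (fun σ => rfl)
    rw [e2, ← Finset.sum_add_sum_compl I]
    have e3 : ∑ σ ∈ I, max (d σ) 0 = a :=
      Finset.sum_congr rfl fun σ hσ => max_eq_left (hdI σ hσ)
    have e4 : ∑ σ ∈ Iᶜ, max (d σ) 0 = 0 :=
      Finset.sum_eq_zero fun σ hσ => max_eq_right (hdIc σ (by simpa using hσ))
    rw [e3, e4, add_zero]
  have hSlow : ∀ (J : Finset (ZMod f)) (c : ZMod f), -b ≤ ∑ τ ∈ J, d (τ + c) := by
    intro J c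
    calc -b = ∑ σ : ZMod f, min (d (σ + c)) 0 := (hmin c).symm
      _ ≤ ∑ σ ∈ J, min (d (σ + c)) 0 := by
          rw [← Finset.sum_sdiff (Finset.subset_univ J)]
          have : ∑ σ ∈ Finset.univ \ J, min (d (σ + c)) 0 ≤ 0 :=
            Finset.sum_nonpos fun σ _ => min_le_right _ _
          linarith
      _ ≤ ∑ σ ∈ J, d (σ + c) := Finset.sum_le_sum fun σ _ => min_le_left _ _
  have hShigh : ∀ (J : Finset (ZMod f)) (c : ZMod f), ∑ τ ∈ J, d (τ + c) ≤ a := by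
    intro J c
    calc ∑ σ ∈ J, d (σ + c) ≤ ∑ σ ∈ J, max (d (σ + c)) 0 :=
          Finset.sum_le_sum fun σ _ => le_max_left _ _
      _ ≤ ∑ σ : ZMod f, max (d (σ + c)) 0 := by
          rw [← Finset.sum_sdiff (Finset.subset_univ J)]
          have : 0 ≤ ∑ σ ∈ Finset.univ \ J, max (d (σ + c)) 0 :=
            Finset.sum_nonneg fun σ _ => le_max_right _ _
          linarith
      _ = a := hmax c
  have hTd : ∀ τ, Twist p f x τ - Twist p f (vert f I) τ
      = ∑ j ∈ Finset.range f, (p:ℝ)^(f-1-j) * d (τ + (j : ZMod f)) := by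
    intro τ
    rw [Twist, Twist, ← Finset.sum_sub_distrib]
    exact Finset.sum_congr rfl fun j _ => by rw [← mul_sub]
  have hKey : ∀ J : Finset (ZMod f),
      ∑ τ ∈ J, (Twist p f x τ - Twist p f (vert f I) τ)
      = (∑ j ∈ Finset.range (f-1), (p:ℝ)^j * ∑ τ ∈ J, d (τ + ((f-1-j : ℕ) : ZMod f)))
        + P * ∑ τ ∈ J, d τ := by
    intro J
    rw [Finset.sum_congr rfl fun τ _ => hTd τ, Finset.sum_comm]
    have e1 : ∀ j, ∑ τ ∈ J, (p:ℝ)^(f-1-j) * d (τ + (j : ZMod f))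
        = (p:ℝ)^(f-1-j) * ∑ τ ∈ J, d (τ + (j : ZMod f)) := fun j =>
      (Finset.mul_sum _ _ _).symm
    rw [Finset.sum_congr rfl fun j _ => e1 j]
    have hrefl : (∑ j ∈ Finset.range f, (p:ℝ)^(f-1-j) * ∑ τ ∈ J, d (τ + (j : ZMod f)))
        = ∑ j ∈ Finset.range f, (p:ℝ)^j * ∑ τ ∈ J, d (τ + ((f-1-j : ℕ) : ZMod f)) := by
      rw [← Finset.sum_range_reflect]
      refine Finset.sum_congr rfl fun j hj => ?_
      rw [Finset.mem_range] at hj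
      rw [Nat.sub_sub_self (by omega)]
    rw [hrefl, show Finset.range f = Finset.range (f-1+1) from by
        rw [Nat.sub_add_cancel hf],
      Finset.sum_range_succ, Nat.sub_self]
    simp only [Nat.cast_zero, add_zero, ← hPdef]
  -- inequality A
  have hA : P * a - bigM p f * b ≤ δ := by
    have h1 : ∑ τ ∈ I, (Twist p f x τ - Twist p f (vert f I) τ) ≤ δ := by
      rw [Finset.sum_sub_distrib]; linarith
    rw [hKey I] at h1
    have h2 : bigM p f * (-b) ≤ ∑ j ∈ Finset.range (f-1),
        (p:ℝ)^j * ∑ τ ∈ I, d (τ + ((f-1-j : ℕ) : ZMod f)) := by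
      rw [bigM, Finset.sum_mul]
      exact Finset.sum_le_sum fun j _ =>
        mul_le_mul_of_nonneg_left (hSlow I _) (by positivity)
    rw [← ha] at h1
    nlinarith
  -- inequality B
  have hB : P * b - bigM p f * a ≤ f * δ := by
    have hδ0 : 0 < δ := by
      rw [hδdef]; exact div_pos (mul_pos hε (by linarith)) (by positivity)
    have h1 : -(f * δ) ≤ ∑ τ ∈ Iᶜ, (Twist p f x τ - Twist p f (vert f I) τ) := by
      have hcard : (Iᶜ.card : ℝ) ≤ f := by
        have h0 := Finset.card_le_univ Iᶜ
        rw [ZMod.card] at h0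
        exact_mod_cast h0
      calc -(f * δ) ≤ -((Iᶜ.card : ℝ) * δ) := by nlinarith
        _ = ∑ τ ∈ Iᶜ, (-δ) := by rw [Finset.sum_const, nsmul_eq_mul]; ring
        _ ≤ _ := Finset.sum_le_sum fun τ hτ => by
            have := hpt τ (by simpa using hτ); linarith
    rw [hKey Iᶜ] at h1
    have h2 : ∑ j ∈ Finset.range (f-1),
        (p:ℝ)^j * ∑ τ ∈ Iᶜ, d (τ + ((f-1-j : ℕ) : ZMod f)) ≤ bigM p f * a := by
      rw [bigM, Finset.sum_mul]
      exact Finset.sum_le_sum fun j _ =>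
        mul_le_mul_of_nonneg_left (hShigh Iᶜ _) (by positivity)
    have h3 : ∑ τ ∈ Iᶜ, d τ = -b := by
      rw [hb]; simp
    rw [h3] at h1
    nlinarith
  -- combine
  have hab : a + b ≤ ε / (bigN p f + 1) := by
    have hPM : 0 < P - bigM p f := by linarith
    have key : (P - bigM p f) * (a + b) ≤ (f + 1) * δ := by nlinarith
    have hδval : (f + 1) * δ = ε * (P - bigM p f) / (bigN p f + 1) := by
      rw [hδdef]; field_simp
    rw [hδval] at key
    have heq : ε * (P - bigM p f) / (bigN p f + 1)
        = (P - bigM p f) * (ε / (bigN p f + 1)) := by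
      field_simp
    rw [heq] at key
    exact (mul_le_mul_iff_right₀ hPM).mp key
  have hdsmall : ∀ σ, |d σ| ≤ a + b := by
    intro σ
    by_cases hσ : σ ∈ I
    · rw [abs_of_nonneg (hdI σ hσ)]
      have : d σ ≤ a := Finset.single_le_sum hdI hσ
      linarith
    · rw [abs_of_nonpos (hdIc σ hσ)]
      have : -d σ ≤ b := Finset.single_le_sum (f := fun σ => -d σ)
        (fun τ hτ => neg_nonneg.2 (hdIc τ (Finset.mem_compl.1 hτ)))
        (Finset.mem_compl.2 hσ)
      linarith
  intro τ
  have hεN : ε / (bigN p f + 1) < ε := by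
    have h1le : (1:ℝ) < bigN p f + 1 := by
      have : (1:ℝ) ≤ bigN p f := by rw [hNM]; nlinarith [one_le_pow₀ hp1 (n := f-1)]
      linarith
    exact div_lt_self hε h1le
  constructor
  · calc |x τ - vert f I τ| = |d τ| := rfl
      _ ≤ a + b := hdsmall τ
      _ ≤ ε / (bigN p f + 1) := hab
      _ < ε := hεN
  · have h1 : |Twist p f x τ - Twist p f (vert f I) τ|
        ≤ ∑ j ∈ Finset.range f, (p:ℝ)^(f-1-j) * |d (τ + (j : ZMod f))| := by
      rw [hTd τ]
      refine (Finset.abs_sum_le_sum_abs _ _).trans ?_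
      exact Finset.sum_le_sum fun j _ => by rw [abs_mul, abs_of_nonneg (by positivity)]
    have h2 : ∑ j ∈ Finset.range f, (p:ℝ)^(f-1-j) * |d (τ + (j : ZMod f))|
        ≤ ∑ j ∈ Finset.range f, (p:ℝ)^(f-1-j) * (a + b) :=
      Finset.sum_le_sum fun j _ =>
        mul_le_mul_of_nonneg_left (hdsmall _) (by positivity)
    have h3 : ∑ j ∈ Finset.range f, (p:ℝ)^(f-1-j) * (a + b) = bigN p f * (a + b) := by
      rw [← Finset.sum_mul, bigN]
      congr 1
      exact Finset.sum_range_reflect (fun j => (p:ℝ)^j) f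
    have h4 : bigN p f * (a + b) ≤ bigN p f * (ε / (bigN p f + 1)) :=
      mul_le_mul_of_nonneg_left hab hNnonneg
    have h5 : bigN p f * (ε / (bigN p f + 1)) < ε := by
      have hpos : 0 < ε / (bigN p f + 1) := div_pos hε (by linarith)
      calc bigN p f * (ε / (bigN p f + 1))
          < (bigN p f + 1) * (ε / (bigN p f + 1)) :=
            mul_lt_mul_of_pos_right (by linarith) hpos
        _ = ε := by field_simp
    linarith
end

section
/- Let $I \subseteq \mathbb{Z}/f\mathbb{Z}$ and let $\epsilon$ be a real number with $0 < \epsilon < \tfrac{1}{2}(p^{f-1} - M)$. Suppose $a, b \in \mathbb{R}^{\mathbb{Z}/f\mathbb{Z}}$ satisfy $|a_\tau - \tilde{x}_{I,\tau}| \le \epsilon$ and $|b_\tau - \tilde{x}_{I^c,\tau}| \le \epsilon$ for all $\tau$. Then for every $\tau$: $\min(a_\tau, b_\tau) = a_\tau$ if $\tau \in I$ and $\min(a_\tau, b_\tau) = b_\tau$ if $\tau \notin I$; moreover $N - \min(a_\tau, b_\tau) \ge p^{f-1} - \epsilon \ge M + \epsilon$. (This is the quantitative content of the paper's Lemma 3.3(ii):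 with $a = \tilde{\deg}\,H$, $b = \tilde{\deg}\,H_1$ and $\tilde{\deg}_\tau H_2 = \inf(\tilde{\deg}_\tau H, \tilde{\deg}_\tau H_1)$, the point $y_2$, whose twisted degrees are $N - \tilde{\deg}_\tau H_2$, lies in $\mathcal{U}_\varnothing(\epsilon)$.) -/
open Finset

lemma bigN_eq (p f : ℕ) (hf : 1 ≤ f) : bigN p f = bigM p f + (p : ℝ) ^ (f - 1) := by
  unfold bigN bigM
  conv_lhs => rw [show f = (f - 1) + 1 by omega]
  rw [Finset.sum_range_succ]

lemma twist_add (p f : ℕ) [NeZero f] (I : Finset (ZMod f)) (τ : ZMod f) :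
    Twist p f (vert f I) τ + Twist p f (vert f Iᶜ) τ = bigN p f := by
  unfold Twist bigN
  rw [← Finset.sum_add_distrib, ← Finset.sum_range_reflect (fun j => (p:ℝ)^j) f]
  refine Finset.sum_congr rfl fun j hj => ?_
  rw [← mul_add]
  have : vert f I (τ + j) + vert f Iᶜ (τ + j) = 1 := by
    unfold vert
    by_cases h : τ + (j : ZMod f) ∈ I <;> simp [h, Finset.mem_compl]
  rw [this, mul_one]

lemma twist_ge (p f : ℕ) [NeZero f] (hf : 1 ≤ f) (I : Finset (ZMod f)) (τ : ZMod f) (hτ : τ ∉ I) :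
    (p : ℝ) ^ (f - 1) ≤ Twist p f (vert f I) τ := by
  unfold Twist
  have h0 : (0 : ℕ) ∈ Finset.range f := by simp; omega
  have := Finset.single_le_sum (f := fun j => (p : ℝ) ^ (f - 1 - j) * vert f I (τ + (j : ZMod f)))
    (fun i _ => by
      unfold vert
      positivity) h0
  simpa [vert, hτ] using this

lemma twist_le (p f : ℕ) [NeZero f] (hf : 1 ≤ f) (I : Finset (ZMod f)) (τ : ZMod f) (hτ : τ ∈ I) :
    Twist p f (vert f I) τ ≤ bigM p f := by
  have h1 := twist_add p f I τ
  have h2 := twist_ge p f hf Iᶜ τ (by simpa [Finset.mem_compl] using hτ)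
  have h3 := bigN_eq p f hf
  linarith

theorem stmt_5 (p f : ℕ) (hp : 2 ≤ p) (hf : 1 ≤ f) [NeZero f]
    (I : Finset (ZMod f)) (ε : ℝ) (hε0 : 0 < ε)
    (hε1 : ε < (1 / 2) * ((p : ℝ) ^ (f - 1) - bigM p f))
    (a b : ZMod f → ℝ)
    (ha : ∀ τ, |a τ - Twist p f (vert f I) τ| ≤ ε)
    (hb : ∀ τ, |b τ - Twist p f (vert f Iᶜ) τ| ≤ ε) :
    ∀ τ, (τ ∈ I → min (a τ) (b τ) = a τ) ∧
      (τ ∉ I → min (a τ) (b τ) = b τ) ∧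
      (p : ℝ) ^ (f - 1) - ε ≤ bigN p f - min (a τ) (b τ) ∧
      bigM p f + ε ≤ (p : ℝ) ^ (f - 1) - ε := by
  intro τ
  have ha' := abs_le.mp (ha τ)
  have hb' := abs_le.mp (hb τ)
  have hNeq := bigN_eq p f hf
  by_cases hτ : τ ∈ I
  · have h1 := twist_le p f hf I τ hτ
    have h2 := twist_ge p f hf Iᶜ τ (by simpa [Finset.mem_compl] using hτ)
    have hab : a τ ≤ b τ := by linarith
    have hmin : min (a τ) (b τ) = a τ := min_eq_left hab
    refine ⟨fun _ => hmin, fun h => absurd hτ h, ?_, by linarith⟩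
    rw [hmin]; linarith
  · have h1 := twist_le p f hf Iᶜ τ (by simpa [Finset.mem_compl] using hτ)
    have h2 := twist_ge p f hf I τ hτ
    have hab : b τ ≤ a τ := by linarith
    have hmin : min (a τ) (b τ) = b τ := min_eq_right hab
    refine ⟨fun h => absurd h hτ, fun _ => hmin, ?_, by linarith⟩
    rw [hmin]; linarith
end

section
/- Let $I, J \subseteq \mathbb{Z}/f\mathbb{Z}$ and $\epsilon > 0$. If the $0$–$1$ vector $x_J$ satisfies $(T x_J)_\tau \ge M + \epsilon$ for all $\tau \notin I$ and $\sum_{\tau \in I} (T x_J)_\tau \ge \sum_{\tau \in I} \tilde{x}_{I,\tau} + \epsilon$, then $J \subsetneq I$ (i.e., $J \subseteq I$ and $J \ne I$). (This is the step in the paper's proof of the automatic analytic continuation lemma showing that a point of $\mathcal{U}_I(\epsilon)$ whose degree vector equals a vertex $x_J$ must have $J$ a proper subset of $I$.) -/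
open Finset

theorem stmt_6 (p f : ℕ) (hp : 2 ≤ p) (hf : 1 ≤ f) [NeZero f]
    (I J : Finset (ZMod f)) (ε : ℝ) (hε : 0 < ε)
    (h1 : ∀ τ ∉ I, bigM p f + ε ≤ Twist p f (vert f J) τ)
    (h2 : ∑ τ ∈ I, Twist p f (vert f I) τ + ε ≤ ∑ τ ∈ I, Twist p f (vert f J) τ) :
    J ⊆ I ∧ J ≠ I := by
  constructor
  · intro τ hτJ
    by_contra hτI
    have hb := h1 τ hτI
    have hle : Twist p f (vert f J) τ ≤ bigM p f := by
      rw [Twist]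
      have step1 : ∑ j ∈ Finset.range f, (p : ℝ) ^ (f - 1 - j) * vert f J (τ + (j : ZMod f))
          ≤ ∑ j ∈ Finset.range f, (if j = 0 then 0 else (p : ℝ) ^ (f - 1 - j)) := by
        apply Finset.sum_le_sum
        intro j hj
        by_cases hj0 : j = 0
        · simp [hj0, vert, hτJ]
        · simp only [hj0, if_false, vert]
          split
          · simp [pow_nonneg (by positivity : (0:ℝ) ≤ (p:ℝ))]
          · simp
      refine step1.trans_eq ?_
      obtain ⟨g, rfl⟩ : ∃ g, f = g + 1 := ⟨f - 1, by omega⟩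
      rw [Finset.sum_range_succ']
      simp only [Nat.succ_ne_zero, if_false, if_pos rfl, add_zero]
      rw [bigM]
      have : ∀ k ∈ Finset.range g, (p:ℝ) ^ (g + 1 - 1 - (k + 1)) = (p:ℝ) ^ (g - 1 - k) := by
        intro k hk; congr 1; omega
      rw [Finset.sum_congr rfl this, Finset.sum_range_reflect (fun k => (p:ℝ) ^ k) g]
      simp
    linarith
  · rintro rfl
    linarith
end
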